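/- arXiv:2605.24819 — 2 statements merged into one kernel-verified Lean document; each statement's English description precedes it below -/
import Mathlib

section
/- Let P ∈ ℝ^{d×n} be a Haar–Stiefel matrix with 3 ≤ d < n, and let u, v ∈ ℝⁿ be unit vectors with ρ := ⟨u,v⟩. Then E[(‖Pu‖ − ‖Pv‖)²] ≤ (8(n−d)/(n(n−1)))·(1−ρ). In particular E[(‖Pu‖ − ‖Pv‖)²] ≤ C_{n,d}·(1−⟨u,v⟩)/n with C_{n,d} := 8(n−d)/(n−1) ≤ 8. -/
open MeasureTheory Matrix

/-- Measurable space structure on real matrices (as a pi type). -/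
instance {d n : ℕ} : MeasurableSpace (Matrix (Fin d) (Fin n) ℝ) :=
  inferInstanceAs (MeasurableSpace (Fin d → Fin n → ℝ))

/-- Euclidean inner product on `m → ℝ`. -/
noncomputable def dotR {m : Type*} [Fintype m] (x y : m → ℝ) : ℝ := ∑ i, x i * y i

/-- Euclidean norm on `m → ℝ`. -/
noncomputable def norR {m : Type*} [Fintype m] (x : m → ℝ) : ℝ := Real.sqrt (dotR x x)

/-- The section-efficiency ratio Γ(P;u,v) = (‖Pu‖‖Pv‖ − ⟨Pu,Pv⟩)/(1 − ⟨u,v⟩). -/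
noncomputable def Gam {d n : ℕ} (P : Matrix (Fin d) (Fin n) ℝ) (u v : Fin n → ℝ) : ℝ :=
  (norR (P.mulVec u) * norR (P.mulVec v) - dotR (P.mulVec u) (P.mulVec v)) / (1 - dotR u v)

/-- `μ` is the Haar–Stiefel distribution: a probability measure supported on the
Stiefel manifold `{P : P Pᵀ = I_d}` that is invariant under right multiplication
by any orthogonal matrix.  (This characterizes the law of the first `d` rows of a
Haar-distributed orthogonal matrix.) -/
def IsHaarStiefel {d n : ℕ} (μ : Measure (Matrix (Fin d) (Fin n) ℝ)) : Prop :=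
  IsProbabilityMeasure μ ∧
  (∀ᵐ P ∂μ, P * Pᵀ = 1) ∧
  ∀ Q : Matrix (Fin n) (Fin n) ℝ, Q ∈ Matrix.orthogonalGroup (Fin n) ℝ →
    μ.map (fun P => P * Q) = μ

/-!
Write `G = PᵀP`, the orthogonal projection onto the row space of `P`. For unit vectors `u, v` the
vectors `s = u + v` and `t = u - v` are orthogonal, `⟪Ps, Pt⟫ = ‖Pu‖² - ‖Pv‖²` and
`‖Ps‖ ≤ ‖Pu‖ + ‖Pv‖`, so `(‖Pu‖ - ‖Pv‖)² ≤ ⟪Ps, Pt⟫² / ‖Ps‖²`. By the right-invariance of the law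
of `P`, the expectation of the right-hand side is `‖t‖² = 2(1 - ρ)` times its value for
`s = eᵢ, t = eⱼ`, namely `E[Gᵢⱼ² / Gᵢᵢ]`. These expectations agree for all `j ≠ i`, and
`∑_{j ≠ i} Gᵢⱼ² / Gᵢᵢ ≤ 1 - Gᵢᵢ` because `G² = G`; together with `E[Gᵢᵢ] = d / n` (as `tr G = d`)
this gives `E[Gᵢⱼ² / Gᵢᵢ] ≤ (n - d) / (n (n - 1))`, hence the bound even with `2` in place of `8`.
-/

theorem sq_norm_sub_norm_le {E : Type*} [NormedAddCommGroup E] [InnerProductSpace ℝ E]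
    (a b : E) : (‖a‖ - ‖b‖) ^ 2 ≤ inner ℝ (a + b) (a - b) ^ 2 / ‖a + b‖ ^ 2 := by
  have hinner : inner ℝ (a + b) (a - b) = (‖a‖ - ‖b‖) * (‖a‖ + ‖b‖) := by
    simp only [inner_add_left, inner_sub_right, real_inner_self_eq_norm_sq, real_inner_comm a b]
    ring
  rcases eq_or_ne (a + b) 0 with hab | hab
  · rw [eq_neg_of_add_eq_zero_right hab, norm_neg, sub_self]
    simp
  rw [le_div_iff₀ (by positivity), hinner, mul_pow _ (‖a‖ + ‖b‖)]
  gcongr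
  exact norm_add_le a b

section Vectors

variable {ι : Type*} [Fintype ι]

theorem dotR_eq_dotProduct (x y : ι → ℝ) : dotR x y = x ⬝ᵥ y := rfl

theorem dotR_eq_inner (x y : ι → ℝ) : dotR x y = inner ℝ (WithLp.toLp 2 x) (WithLp.toLp 2 y) := by
  simp [dotR_eq_dotProduct, EuclideanSpace.inner_toLp_toLp, dotProduct_comm]

theorem norR_eq_norm (x : ι → ℝ) : norR x = ‖WithLp.toLp 2 x‖ := by
  rw [norR, dotR_eq_inner, real_inner_self_eq_norm_sq, Real.sqrt_sq (norm_nonneg _)]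

theorem dotR_self_nonneg (x : ι → ℝ) : 0 ≤ dotR x x := by
  rw [dotR_eq_inner]
  exact real_inner_self_nonneg

theorem dotR_sq_le (x y : ι → ℝ) : dotR x y ^ 2 ≤ dotR x x * dotR y y := by
  simpa only [dotR, sq] using Finset.sum_mul_sq_le_sq_mul_sq Finset.univ x y

theorem dotR_smul_smul (a b : ℝ) (x y : ι → ℝ) : dotR (a • x) (b • y) = a * b * dotR x y := by
  simp only [dotR_eq_dotProduct, smul_dotProduct, dotProduct_smul, smul_eq_mul]
  ring

theorem norR_sq (x : ι → ℝ) : norR x ^ 2 = dotR x x :=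
  Real.sq_sqrt (dotR_self_nonneg x)

theorem norR_ne_zero {x : ι → ℝ} (hx : x ≠ 0) : norR x ≠ 0 := by
  intro h
  apply hx
  rw [← dotProduct_self_eq_zero, ← dotR_eq_dotProduct, ← norR_sq, h, sq, zero_mul]

theorem dotR_inv_norR_smul_self {x : ι → ℝ} (hx : x ≠ 0) :
    dotR ((norR x)⁻¹ • x) ((norR x)⁻¹ • x) = 1 := by
  rw [dotR_smul_smul, ← norR_sq]
  field_simp [norR_ne_zero hx]

theorem sq_norR_sub_norR_le (a b : ι → ℝ) :
    (norR a - norR b) ^ 2 ≤ dotR (a + b) (a - b) ^ 2 / dotR (a + b) (a + b) := by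
  simpa only [norR_eq_norm, dotR_eq_inner, real_inner_self_eq_norm_sq, WithLp.toLp_add,
    WithLp.toLp_sub] using sq_norm_sub_norm_le (WithLp.toLp 2 a) (WithLp.toLp 2 b)

theorem nontrivial_of_dotR_eq_zero {s t : ι → ℝ} (hs : s ≠ 0) (ht : t ≠ 0)
    (hst : dotR s t = 0) : Nontrivial ι := by
  by_contra h
  rw [not_nontrivial_iff_subsingleton] at h
  obtain ⟨i, hi⟩ := Function.ne_iff.1 hs
  obtain ⟨j, hj⟩ := Function.ne_iff.1 ht
  rw [Subsingleton.elim j i] at hj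
  rw [dotR, Finset.sum_eq_single i (fun k _ hk => absurd (Subsingleton.elim k i) hk)
    (by simp)] at hst
  exact mul_ne_zero hi hj hst

end Vectors

section Coisometry

variable {k ι : Type*} [Fintype k] [Fintype ι] {P : Matrix k ι ℝ}

theorem dotR_mulVec_left (A : Matrix k ι ℝ) (x : ι → ℝ) (y : k → ℝ) :
    dotR (A *ᵥ x) y = dotR x (Aᵀ *ᵥ y) := by
  rw [dotR_eq_dotProduct, dotR_eq_dotProduct, dotProduct_comm, dotProduct_mulVec,
    mulVec_transpose, dotProduct_comm]

-- `Pᵀ` is an isometry, so `‖P w‖² = ⟪w, Pᵀ P w⟫ ≤ ‖w‖ ‖P w‖` by Cauchy–Schwarz.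
theorem dotR_mulVec_self_le [DecidableEq k] (hP : P * Pᵀ = 1) (w : ι → ℝ) :
    dotR (P *ᵥ w) (P *ᵥ w) ≤ dotR w w := by
  have hiso : dotR (Pᵀ *ᵥ (P *ᵥ w)) (Pᵀ *ᵥ (P *ᵥ w)) = dotR (P *ᵥ w) (P *ᵥ w) := by
    rw [dotR_mulVec_left, transpose_transpose, mulVec_mulVec, hP, one_mulVec]
  have hcs := dotR_sq_le w (Pᵀ *ᵥ (P *ᵥ w))
  rw [hiso, ← dotR_mulVec_left] at hcs
  nlinarith [dotR_self_nonneg (P *ᵥ w), dotR_self_nonneg w]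

theorem dotR_mulVec_single [DecidableEq ι] (P : Matrix k ι ℝ) (i j : ι) :
    dotR (P *ᵥ Pi.single i 1) (P *ᵥ Pi.single j 1) = (Pᵀ * P) i j := by
  rw [mulVec_single_one, mulVec_single_one, mul_apply', dotR_eq_dotProduct]
  rfl

theorem sum_gram_sq [DecidableEq k] (hP : P * Pᵀ = 1) (i : ι) :
    ∑ j, (Pᵀ * P) i j ^ 2 = (Pᵀ * P) i i := by
  have hidem : Pᵀ * P * (Pᵀ * P) = Pᵀ * P := by
    rw [Matrix.mul_assoc, ← Matrix.mul_assoc P, hP, Matrix.one_mul]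
  have hsymm : ∀ j, (Pᵀ * P) j i = (Pᵀ * P) i j := fun j => by
    rw [← transpose_apply (Pᵀ * P) i j, transpose_mul, transpose_transpose]
  calc ∑ j, (Pᵀ * P) i j ^ 2 = ∑ j, (Pᵀ * P) i j * (Pᵀ * P) j i := by simp only [sq, hsymm]
    _ = (Pᵀ * P) i i := by rw [← mul_apply, hidem]

theorem trace_transpose_mul_self [DecidableEq k] (hP : P * Pᵀ = 1) :
    ∑ i, (Pᵀ * P) i i = Fintype.card k := by
  change (Pᵀ * P).trace = _
  rw [trace_mul_comm, hP, trace_one]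

end Coisometry

/-- The squared length of the orthogonal projection of `P t` onto the line through `P s`
(zero when `P s = 0`). -/
noncomputable def projNormSq {k ι : Type*} [Fintype k] [Fintype ι] (P : Matrix k ι ℝ)
    (s t : ι → ℝ) : ℝ :=
  dotR (P *ᵥ s) (P *ᵥ t) ^ 2 / dotR (P *ᵥ s) (P *ᵥ s)

section projNormSq

variable {k ι : Type*} [Fintype k] [Fintype ι] {P : Matrix k ι ℝ}

theorem projNormSq_nonneg (P : Matrix k ι ℝ) (s t : ι → ℝ) : 0 ≤ projNormSq P s t :=
  div_nonneg (sq_nonneg _) (dotR_self_nonneg _)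

theorem projNormSq_le [DecidableEq k] (hP : P * Pᵀ = 1) (s t : ι → ℝ) :
    projNormSq P s t ≤ dotR t t := by
  refine div_le_of_le_mul₀ (dotR_self_nonneg _) (dotR_self_nonneg _) ?_
  calc dotR (P *ᵥ s) (P *ᵥ t) ^ 2 ≤ dotR (P *ᵥ s) (P *ᵥ s) * dotR (P *ᵥ t) (P *ᵥ t) :=
        dotR_sq_le _ _
    _ ≤ dotR (P *ᵥ s) (P *ᵥ s) * dotR t t :=
        mul_le_mul_of_nonneg_left (dotR_mulVec_self_le hP t) (dotR_self_nonneg _)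
    _ = dotR t t * dotR (P *ᵥ s) (P *ᵥ s) := mul_comm _ _

theorem projNormSq_smul (P : Matrix k ι ℝ) {a : ℝ} (ha : a ≠ 0) (b : ℝ) (s t : ι → ℝ) :
    projNormSq P (a • s) (b • t) = b ^ 2 * projNormSq P s t := by
  simp only [projNormSq, mulVec_smul, dotR_eq_dotProduct, smul_dotProduct, dotProduct_smul,
    smul_eq_mul]
  generalize P *ᵥ s ⬝ᵥ P *ᵥ t = x
  generalize P *ᵥ s ⬝ᵥ P *ᵥ s = q
  rw [show (b * (a * x)) ^ 2 = a ^ 2 * (b ^ 2 * x ^ 2) by ring,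
    show a * (a * q) = a ^ 2 * q by ring, mul_div_mul_left _ _ (pow_ne_zero 2 ha), mul_div_assoc]

theorem sq_norR_mulVec_sub_le (P : Matrix k ι ℝ) (u v : ι → ℝ) :
    (norR (P *ᵥ u) - norR (P *ᵥ v)) ^ 2 ≤ projNormSq P (u + v) (u - v) := by
  simpa only [projNormSq, mulVec_add, mulVec_sub] using sq_norR_sub_norR_le (P *ᵥ u) (P *ᵥ v)

theorem sum_projNormSq_single_le [DecidableEq k] [DecidableEq ι] (hP : P * Pᵀ = 1) (i : ι) :
    ∑ j ∈ Finset.univ.erase i, projNormSq P (Pi.single i 1) (Pi.single j 1) ≤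
      1 - (Pᵀ * P) i i := by
  simp only [projNormSq, dotR_mulVec_single]
  rw [← Finset.sum_div, Finset.sum_erase_eq_sub (Finset.mem_univ i), sum_gram_sq hP]
  rcases eq_or_ne ((Pᵀ * P) i i) 0 with h | h
  · simp [h]
  · exact le_of_eq (by field_simp)

end projNormSq

instance {d n : ℕ} : BorelSpace (Matrix (Fin d) (Fin n) ℝ) :=
  inferInstanceAs (BorelSpace (Fin d → Fin n → ℝ))

theorem continuous_dotR_mulVec {d n : ℕ} (x y : Fin n → ℝ) :
    Continuous fun P : Matrix (Fin d) (Fin n) ℝ => dotR (P *ᵥ x) (P *ᵥ y) :=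
  (continuous_id.matrix_mulVec continuous_const).dotProduct
    (continuous_id.matrix_mulVec continuous_const)

theorem measurable_projNormSq {d n : ℕ} (s t : Fin n → ℝ) :
    Measurable fun P : Matrix (Fin d) (Fin n) ℝ => projNormSq P s t :=
  ((continuous_dotR_mulVec s t).measurable.pow_const 2).div
    (continuous_dotR_mulVec s s).measurable

theorem exists_mem_orthogonalGroup_mulVec_single {ι : Type*} [Fintype ι] [DecidableEq ι]
    {s : Set ι} {v : ι → ι → ℝ}
    (hv : ∀ i ∈ s, ∀ j ∈ s, dotR (v i) (v j) = if i = j then 1 else 0) :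
    ∃ Q ∈ orthogonalGroup ι ℝ, ∀ i ∈ s, Q *ᵥ Pi.single i 1 = v i := by
  have hv' : Orthonormal ℝ (s.domRestrict fun i => WithLp.toLp 2 (v i)) := by
    rw [orthonormal_iff_ite]
    rintro ⟨i, hi⟩ ⟨j, hj⟩
    simpa [← dotR_eq_inner, Subtype.ext_iff] using hv i hi j hj
  obtain ⟨b, hb⟩ := hv'.exists_orthonormalBasis_extension_of_card_eq finrank_euclideanSpace
  refine ⟨(EuclideanSpace.basisFun ι ℝ).toBasis.toMatrix b,
    OrthonormalBasis.toMatrix_orthonormalBasis_mem_orthogonal _ _, fun i hi => ?_⟩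
  ext l
  simp [Module.Basis.toMatrix_apply, hb i hi]

theorem sub_div_mul_sub_one_nonneg {d n : ℕ} (h : d ≤ n) :
    0 ≤ ((n : ℝ) - d) / (n * (n - 1)) := by
  refine div_nonneg (sub_nonneg.2 (Nat.cast_le.2 h)) ?_
  rcases n.eq_zero_or_pos with rfl | hn
  · simp
  · exact mul_nonneg (Nat.cast_nonneg n) (sub_nonneg.2 (Nat.one_le_cast.2 hn))

section Invariance

variable {d n : ℕ} {μ : Measure (Matrix (Fin d) (Fin n) ℝ)}

theorem integral_comp_mul_orthogonal (hμ : ∀ Q ∈ orthogonalGroup (Fin n) ℝ, μ.map (· * Q) = μ)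
    {Q : Matrix (Fin n) (Fin n) ℝ} (hQ : Q ∈ orthogonalGroup (Fin n) ℝ)
    (f : Matrix (Fin d) (Fin n) ℝ → ℝ) :
    ∫ P, f (P * Q) ∂μ = ∫ P, f P ∂μ := by
  let e : Matrix (Fin d) (Fin n) ℝ ≃ᵐ Matrix (Fin d) (Fin n) ℝ :=
    { toFun := (· * Q)
      invFun := (· * Qᵀ)
      left_inv := fun P => by simp [Matrix.mul_assoc, (mem_orthogonalGroup_iff _ _).1 hQ]
      right_inv := fun P => by simp [Matrix.mul_assoc, (mem_orthogonalGroup_iff' _ _).1 hQ]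
      measurable_toFun := (continuous_id.matrix_mul continuous_const).measurable
      measurable_invFun := (continuous_id.matrix_mul continuous_const).measurable }
  calc ∫ P, f (P * Q) ∂μ = ∫ P, f P ∂μ.map e := (integral_map_equiv e f).symm
    _ = ∫ P, f P ∂μ := congrArg (fun ν => ∫ P, f P ∂ν) (hμ Q hQ)

theorem integral_comp_mulVec_unit (hμ : ∀ Q ∈ orthogonalGroup (Fin n) ℝ, μ.map (· * Q) = μ)
    {x : Fin n → ℝ} (hx : dotR x x = 1) (i : Fin n) (F : (Fin d → ℝ) → ℝ) :
    ∫ P, F (P *ᵥ x) ∂μ = ∫ P, F (P *ᵥ Pi.single i 1) ∂μ := by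
  obtain ⟨Q, hQ, hQx⟩ := exists_mem_orthogonalGroup_mulVec_single (s := {i}) (v := fun _ => x)
    (by simp [hx])
  rw [← integral_comp_mul_orthogonal hμ hQ fun P => F (P *ᵥ Pi.single i 1)]
  simp only [← mulVec_mulVec, hQx i rfl]

theorem integral_comp_mulVec_orthonormal (hμ : ∀ Q ∈ orthogonalGroup (Fin n) ℝ, μ.map (· * Q) = μ)
    {x y : Fin n → ℝ} (hx : dotR x x = 1) (hy : dotR y y = 1) (hxy : dotR x y = 0)
    {i j : Fin n} (hij : i ≠ j)
    (F : (Fin d → ℝ) → (Fin d → ℝ) → ℝ) :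
    ∫ P, F (P *ᵥ x) (P *ᵥ y) ∂μ = ∫ P, F (P *ᵥ Pi.single i 1) (P *ᵥ Pi.single j 1) ∂μ := by
  rw [dotR_eq_dotProduct] at hx hy hxy
  obtain ⟨Q, hQ, hQv⟩ := exists_mem_orthogonalGroup_mulVec_single (s := {i, j})
    (v := fun k => if k = i then x else y) (by
      rintro k (rfl | rfl) l (rfl | rfl) <;>
        simp [dotR_eq_dotProduct, dotProduct_comm y x, hx, hy, hxy, hij, hij.symm])
  rw [← integral_comp_mul_orthogonal hμ hQ
    fun P => F (P *ᵥ Pi.single i 1) (P *ᵥ Pi.single j 1)]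
  simp only [← mulVec_mulVec, hQv i (by simp), hQv j (by simp), hij.symm, ite_true, ite_false]

end Invariance

namespace IsHaarStiefel

variable {d n : ℕ} {μ : Measure (Matrix (Fin d) (Fin n) ℝ)}

theorem dim_le (hμ : IsHaarStiefel μ) : d ≤ n := by
  have := hμ.1
  obtain ⟨P, hP⟩ := hμ.2.1.exists
  calc d = (P * Pᵀ).rank := by rw [hP, rank_one, Fintype.card_fin]
    _ ≤ P.rank := rank_mul_le_left _ _
    _ ≤ n := P.rank_le_width

theorem integrable_projNormSq (hμ : IsHaarStiefel μ) (s t : Fin n → ℝ) :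
    Integrable (fun P => projNormSq P s t) μ := by
  have := hμ.1
  refine .of_bound (measurable_projNormSq s t).aestronglyMeasurable (dotR t t) ?_
  filter_upwards [hμ.2.1] with P hP
  rw [Real.norm_of_nonneg (projNormSq_nonneg P s t)]
  exact projNormSq_le hP s t

-- `Gᵢᵢ = Gᵢᵢ² / Gᵢᵢ` holds also when `Gᵢᵢ = 0`.
theorem integrable_gram_diag (hμ : IsHaarStiefel μ) (i : Fin n) :
    Integrable (fun P : Matrix (Fin d) (Fin n) ℝ => (Pᵀ * P) i i) μ := by
  simpa only [projNormSq, dotR_mulVec_single, sq, mul_self_div_self] using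
    hμ.integrable_projNormSq (Pi.single i 1) (Pi.single i 1)

theorem integral_gram_diag (hμ : IsHaarStiefel μ) (i : Fin n) :
    ∫ P, (Pᵀ * P) i i ∂μ = d / n := by
  have := hμ.1
  have hsymm : ∀ j, ∫ P, (Pᵀ * P) j j ∂μ = ∫ P, (Pᵀ * P) i i ∂μ := fun j => by
    simpa only [dotR_mulVec_single] using
      integral_comp_mulVec_unit hμ.2.2 (x := Pi.single j 1) (by simp [dotR_eq_dotProduct]) i
        (fun a => dotR a a)
  have htrace : ∑ j, ∫ P, (Pᵀ * P) j j ∂μ = d := by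
    rw [← integral_finsetSum _ fun j _ => hμ.integrable_gram_diag j,
      integral_congr_ae (hμ.2.1.mono fun P hP => trace_transpose_mul_self hP)]
    simp
  simp only [hsymm, Finset.sum_const, Finset.card_univ, Fintype.card_fin, nsmul_eq_mul] at htrace
  rw [← htrace, mul_div_cancel_left₀ _ (Nat.cast_ne_zero.2 (Fin.pos i).ne')]

theorem integral_projNormSq_single_le (hμ : IsHaarStiefel μ) {i j : Fin n} (hij : i ≠ j) :
    ∫ P, projNormSq P (Pi.single i 1) (Pi.single j 1) ∂μ ≤ ((n : ℝ) - d) / (n * (n - 1)) := by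
  have := hμ.1
  have hsymm : ∀ k ∈ Finset.univ.erase i, ∫ P, projNormSq P (Pi.single i 1) (Pi.single k 1) ∂μ =
      ∫ P, projNormSq P (Pi.single i 1) (Pi.single j 1) ∂μ := fun k hk =>
    integral_comp_mulVec_orthonormal hμ.2.2 (by simp [dotR_eq_dotProduct])
      (by simp [dotR_eq_dotProduct]) (by simp [dotR_eq_dotProduct, Finset.ne_of_mem_erase hk])
      hij fun a b => dotR a b ^ 2 / dotR a a
  have hsum : ((n : ℝ) - 1) * ∫ P, projNormSq P (Pi.single i 1) (Pi.single j 1) ∂μ =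
      ∫ P, ∑ k ∈ Finset.univ.erase i, projNormSq P (Pi.single i 1) (Pi.single k 1) ∂μ := by
    rw [integral_finsetSum _ fun k _ => hμ.integrable_projNormSq _ _, Finset.sum_congr rfl hsymm,
      Finset.sum_const, Finset.card_erase_of_mem (Finset.mem_univ i), Finset.card_univ,
      Fintype.card_fin, nsmul_eq_mul, Nat.cast_pred (Fin.pos i)]
  have hle : ∫ P, ∑ k ∈ Finset.univ.erase i, projNormSq P (Pi.single i 1) (Pi.single k 1) ∂μ ≤
      ∫ P, (1 - (Pᵀ * P) i i) ∂μ :=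
    integral_mono_ae (integrable_finsetSum _ fun k _ => hμ.integrable_projNormSq _ _)
      ((integrable_const 1).sub (hμ.integrable_gram_diag i))
      (hμ.2.1.mono fun P hP => sum_projNormSq_single_le hP i)
  rw [integral_sub (integrable_const 1) (hμ.integrable_gram_diag i), hμ.integral_gram_diag i,
    ← hsum] at hle
  have hn : (1 : ℝ) < n :=
    Nat.one_lt_cast.2 (by simpa using Fintype.one_lt_card_iff.2 ⟨i, j, hij⟩)
  rw [show ((n : ℝ) - d) / (n * (n - 1)) = (1 - d / n) / (n - 1) by field_simp,
    le_div_iff₀ (sub_pos.2 hn)]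
  simpa [mul_comm] using hle

theorem integral_projNormSq_le (hμ : IsHaarStiefel μ) {s t : Fin n → ℝ} (hst : dotR s t = 0) :
    ∫ P, projNormSq P s t ∂μ ≤ dotR t t * (((n : ℝ) - d) / (n * (n - 1))) := by
  rcases eq_or_ne s 0 with rfl | hs
  · simpa [projNormSq, dotR_eq_dotProduct] using
      mul_nonneg (dotR_self_nonneg t) (sub_div_mul_sub_one_nonneg hμ.dim_le)
  rcases eq_or_ne t 0 with rfl | ht
  · simp [projNormSq, dotR_eq_dotProduct]
  have := nontrivial_of_dotR_eq_zero hs ht hst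
  obtain ⟨i, j, hij⟩ := exists_pair_ne (Fin n)
  set x := (norR s)⁻¹ • s
  set y := (norR t)⁻¹ • t
  have hscale : ∀ P : Matrix (Fin d) (Fin n) ℝ, projNormSq P s t = dotR t t * projNormSq P x y :=
      fun P => by
    rw [← norR_sq, ← projNormSq_smul P (norR_ne_zero hs), smul_inv_smul₀ (norR_ne_zero hs),
      smul_inv_smul₀ (norR_ne_zero ht)]
  have hxy : dotR x y = 0 := by rw [dotR_smul_smul, hst, mul_zero]
  calc ∫ P, projNormSq P s t ∂μ = dotR t t * ∫ P, projNormSq P x y ∂μ := by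
        simp_rw [hscale]
        exact integral_const_mul _ _
    _ = dotR t t * ∫ P, projNormSq P (Pi.single i 1) (Pi.single j 1) ∂μ :=
        congrArg (dotR t t * ·) (integral_comp_mulVec_orthonormal hμ.2.2
          (dotR_inv_norR_smul_self hs) (dotR_inv_norR_smul_self ht) hxy hij
          fun a b => dotR a b ^ 2 / dotR a a)
    _ ≤ dotR t t * (((n : ℝ) - d) / (n * (n - 1))) :=
        mul_le_mul_of_nonneg_left (hμ.integral_projNormSq_single_le hij) (dotR_self_nonneg t)

end IsHaarStiefel

theorem norm_difference_second_moment_general {n d : ℕ} (hd3 : 3 ≤ d)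
    (μ : Measure (Matrix (Fin d) (Fin n) ℝ)) (hμ : IsHaarStiefel μ)
    (u v : Fin n → ℝ) (hu : dotR u u = 1) (hv : dotR v v = 1) :
    (∫ P, (norR (P.mulVec u) - norR (P.mulVec v)) ^ 2 ∂μ ≤
        (8 * ((n : ℝ) - d) / (n * (n - 1))) * (1 - dotR u v)) ∧
    (∫ P, (norR (P.mulVec u) - norR (P.mulVec v)) ^ 2 ∂μ ≤
        (8 * ((n : ℝ) - d) / ((n : ℝ) - 1)) * (1 - dotR u v) / n) ∧
    8 * ((n : ℝ) - d) / ((n : ℝ) - 1) ≤ 8 := by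
  have hdist : dotR (u - v) (u - v) = 2 * (1 - dotR u v) := by
    simp only [dotR_eq_dotProduct, sub_dotProduct, dotProduct_sub, dotProduct_comm v u] at hu hv ⊢
    linarith
  have horth : dotR (u + v) (u - v) = 0 := by
    simp only [dotR_eq_dotProduct, add_dotProduct, dotProduct_sub, dotProduct_comm v u] at hu hv ⊢
    linarith
  have hρ : 0 ≤ 1 - dotR u v := by nlinarith [dotR_self_nonneg (u - v)]
  have hc := sub_div_mul_sub_one_nonneg hμ.dim_le
  have hmoment : ∫ P, (norR (P *ᵥ u) - norR (P *ᵥ v)) ^ 2 ∂μ ≤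
      2 * (1 - dotR u v) * (((n : ℝ) - d) / (n * (n - 1))) :=
    calc ∫ P, (norR (P *ᵥ u) - norR (P *ᵥ v)) ^ 2 ∂μ ≤ ∫ P, projNormSq P (u + v) (u - v) ∂μ :=
          integral_mono_of_nonneg (.of_forall fun _ => sq_nonneg _)
            (hμ.integrable_projNormSq _ _) (.of_forall fun P => sq_norR_mulVec_sub_le P u v)
      _ ≤ 2 * (1 - dotR u v) * (((n : ℝ) - d) / (n * (n - 1))) :=
          hdist ▸ hμ.integral_projNormSq_le horth
  have hd : (3 : ℝ) ≤ d := by exact_mod_cast hd3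
  have hdn : (d : ℝ) ≤ n := by exact_mod_cast hμ.dim_le
  have hbound : 2 * (1 - dotR u v) * (((n : ℝ) - d) / (n * (n - 1))) ≤
      8 * ((n : ℝ) - d) / (n * (n - 1)) * (1 - dotR u v) := by
    rw [mul_div_assoc]
    nlinarith [mul_nonneg hρ hc]
  refine ⟨hmoment.trans hbound, (hmoment.trans hbound).trans_eq
    (by rw [mul_comm (n : ℝ), ← div_div, div_mul_eq_mul_div]), ?_⟩
  rw [div_le_iff₀ (by linarith)]
  linarith

/-- `E[(‖Pu‖ − ‖Pv‖)²] ≤ (8(n−d)/(n(n−1)))(1−ρ)` for Haar–Stiefel `P`, `3 ≤ d < n`,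
unit vectors `u, v`, and in particular
`E[(‖Pu‖ − ‖Pv‖)²] ≤ C_{n,d}(1−⟨u,v⟩)/n` with `C_{n,d} = 8(n−d)/(n−1) ≤ 8`. -/
theorem norm_difference_second_moment {n d : ℕ} (hd3 : 3 ≤ d) (hdn : d < n)
    (μ : Measure (Matrix (Fin d) (Fin n) ℝ)) (hμ : IsHaarStiefel μ)
    (u v : Fin n → ℝ) (hu : dotR u u = 1) (hv : dotR v v = 1) :
    (∫ P, (norR (P.mulVec u) - norR (P.mulVec v)) ^ 2 ∂μ ≤
        (8 * ((n : ℝ) - d) / (n * (n - 1))) * (1 - dotR u v)) ∧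
    (∫ P, (norR (P.mulVec u) - norR (P.mulVec v)) ^ 2 ∂μ ≤
        (8 * ((n : ℝ) - d) / ((n : ℝ) - 1)) * (1 - dotR u v) / n) ∧
    8 * ((n : ℝ) - d) / ((n : ℝ) - 1) ≤ 8 :=
  norm_difference_second_moment_general hd3 μ hμ u v hu hv
end

section
/- Let U ⊆ ℝⁿ be a linear subspace with orthogonal projection Π, let g ∈ ℝⁿ with Πg ≠ 0, let r > 0, and let v ∈ ℝⁿ with ‖v‖ ≤ 1. Then the minimum of y ↦ ⟨g, y⟩ over the section {y ∈ U : ‖y − rv‖ ≤ r} is attained at y* = rΠv − r·√(1 − ‖v‖² + ‖Πv‖²)·Πg/‖Πg‖, and the improvement satisfies 0 − min{⟨g,y⟩ : y ∈ U, ‖y − rv‖ ≤ r} = r·(‖Πg‖·√(1 − ‖v‖² + ‖Πv‖²) − ⟨Πg, Πv⟩). -/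
/-!
Pythagoras splits `‖y - r v‖²`, for `y ∈ U`, into `‖y - r Π v‖² + r² (‖v‖² - ‖Π v‖²)`, so the
section is the ball of `U` with centre `r Π v` and radius `r √(1 - ‖v‖² + ‖Π v‖²)`. On `U` the
functional `⟨g, ·⟩` agrees with `⟨Π g, ·⟩`, and by Cauchy–Schwarz a linear functional `⟨a, ·⟩`
is minimised over a ball `B(c, ρ)` at `c - ρ a / ‖a‖`, with value `⟨a, c⟩ - ρ ‖a‖`.
-/

/-- The orthogonal projection onto a subspace of Euclidean space, viewed as a map
into the ambient space. -/
noncomputable def proj {n : ℕ} (U : Submodule ℝ (EuclideanSpace ℝ (Fin n)))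
    (g : EuclideanSpace ℝ (Fin n)) : EuclideanSpace ℝ (Fin n) :=
  (U.orthogonalProjection g : EuclideanSpace ℝ (Fin n))

theorem proj_eq_starProjection {n : ℕ} (U : Submodule ℝ (EuclideanSpace ℝ (Fin n)))
    (x : EuclideanSpace ℝ (Fin n)) : proj U x = U.starProjection x :=
  rfl

section LinearFunctionalOnBall

variable {E : Type*} [NormedAddCommGroup E] [InnerProductSpace ℝ E]

theorem norm_sub_div_norm_smul_sub_self {a : E} (ha : a ≠ 0) (c : E) {ρ : ℝ} (hρ : 0 ≤ ρ) :
    ‖(c - (ρ / ‖a‖) • a) - c‖ = ρ := by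
  rw [sub_sub_cancel_left, norm_neg, norm_smul, Real.norm_of_nonneg (by positivity),
    div_mul_cancel₀ _ (norm_ne_zero_iff.mpr ha)]

theorem real_inner_sub_div_norm_smul {a : E} (ha : a ≠ 0) (c : E) (ρ : ℝ) :
    inner ℝ a (c - (ρ / ‖a‖) • a) = inner ℝ a c - ρ * ‖a‖ := by
  have : ‖a‖ ≠ 0 := norm_ne_zero_iff.mpr ha
  rw [inner_sub_right, real_inner_smul_right, real_inner_self_eq_norm_sq]
  field_simp

theorem real_inner_sub_div_norm_smul_le {a c y : E} {ρ : ℝ} (hy : ‖y - c‖ ≤ ρ) :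
    inner ℝ a (c - (ρ / ‖a‖) • a) ≤ inner ℝ a y := by
  rcases eq_or_ne a 0 with rfl | ha
  · simp
  rw [real_inner_sub_div_norm_smul ha]
  have hcs : inner ℝ a (c - y) ≤ ‖a‖ * ‖y - c‖ := by
    simpa only [norm_sub_rev] using real_inner_le_norm a (c - y)
  rw [inner_sub_right] at hcs
  linarith [mul_le_mul_of_nonneg_left hy (norm_nonneg a)]

end LinearFunctionalOnBall

namespace Submodule

variable {E : Type*} [NormedAddCommGroup E] [InnerProductSpace ℝ E]
  (K : Submodule ℝ E) [K.HasOrthogonalProjection]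

theorem norm_sub_starProjection_sq (x : E) :
    ‖x - K.starProjection x‖ ^ 2 = ‖x‖ ^ 2 - ‖K.starProjection x‖ ^ 2 := by
  have h := K.starProjection_inner_eq_zero x (K.starProjection x) (K.starProjection_apply_mem x)
  rw [inner_sub_left, real_inner_self_eq_norm_sq] at h
  rw [norm_sub_sq_real]
  linarith

theorem norm_sub_sq_eq_of_mem {y : E} (hy : y ∈ K) (x : E) :
    ‖y - x‖ ^ 2 = ‖y - K.starProjection x‖ ^ 2 + ‖x - K.starProjection x‖ ^ 2 := by
  have horth : inner ℝ (y - K.starProjection x) (x - K.starProjection x) = 0 := by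
    rw [real_inner_comm]
    exact K.starProjection_inner_eq_zero x _ (K.sub_mem hy (K.starProjection_apply_mem x))
  rw [← sub_sub_sub_cancel_right y x (K.starProjection x), norm_sub_sq_real, horth]
  ring

theorem real_inner_starProjection_of_mem {y : E} (hy : y ∈ K) (x : E) :
    inner ℝ (K.starProjection x) y = inner ℝ x y := by
  rw [K.inner_starProjection_left_eq_right, K.starProjection_eq_self_iff.mpr hy]

theorem norm_sub_smul_le_iff_of_mem {x y : E} (hx : ‖x‖ ≤ 1) (hy : y ∈ K) {r : ℝ} (hr : 0 ≤ r) :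
    ‖y - r • x‖ ≤ r ↔
      ‖y - r • K.starProjection x‖ ≤ r * √(1 - ‖x‖ ^ 2 + ‖K.starProjection x‖ ^ 2) := by
  have hD : 0 ≤ 1 - ‖x‖ ^ 2 + ‖K.starProjection x‖ ^ 2 := by
    nlinarith [norm_nonneg x, sq_nonneg ‖K.starProjection x‖]
  have hsplit : ‖y - r • x‖ ^ 2 =
      ‖y - r • K.starProjection x‖ ^ 2 + r ^ 2 * (‖x‖ ^ 2 - ‖K.starProjection x‖ ^ 2) := by
    rw [norm_sub_sq_eq_of_mem K hy, map_smul, ← smul_sub, norm_smul, mul_pow,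
      Real.norm_of_nonneg hr, norm_sub_starProjection_sq]
  rw [← sq_le_sq₀ (norm_nonneg _) hr, ← sq_le_sq₀ (norm_nonneg _) (by positivity), mul_pow,
    Real.sq_sqrt hD, hsplit]
  constructor <;> intro h <;> linarith

end Submodule

/-- Exact ball-section improvement (interior base point).  With `Π` the orthogonal
projection onto the subspace `U`, `Πg ≠ 0`, `r > 0`, and `‖v‖ ≤ 1`, the linear
functional `y ↦ ⟨g,y⟩` over the section `{y ∈ U : ‖y − rv‖ ≤ r}` is minimized at
`y* = rΠv − r√(1 − ‖v‖² + ‖Πv‖²) Πg/‖Πg‖`, and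
`0 − min = r (‖Πg‖ √(1 − ‖v‖² + ‖Πv‖²) − ⟨Πg,Πv⟩)`. -/
theorem ball_section_interior {n : ℕ} (U : Submodule ℝ (EuclideanSpace ℝ (Fin n)))
    (g v : EuclideanSpace ℝ (Fin n)) (hv : ‖v‖ ≤ 1) (r : ℝ) (hr : 0 < r)
    (hg : proj U g ≠ 0) :
    (r • proj U v - (r * Real.sqrt (1 - ‖v‖ ^ 2 + ‖proj U v‖ ^ 2) / ‖proj U g‖) • proj U g ∈ U ∧
      ‖(r • proj U v - (r * Real.sqrt (1 - ‖v‖ ^ 2 + ‖proj U v‖ ^ 2) / ‖proj U g‖) • proj U g) -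
          r • v‖ ≤ r) ∧
    (∀ y ∈ U, ‖y - r • v‖ ≤ r →
      (inner ℝ g (r • proj U v -
          (r * Real.sqrt (1 - ‖v‖ ^ 2 + ‖proj U v‖ ^ 2) / ‖proj U g‖) • proj U g) : ℝ) ≤
        inner ℝ g y) ∧
    0 - (inner ℝ g (r • proj U v -
          (r * Real.sqrt (1 - ‖v‖ ^ 2 + ‖proj U v‖ ^ 2) / ‖proj U g‖) • proj U g) : ℝ) =
      r * (‖proj U g‖ * Real.sqrt (1 - ‖v‖ ^ 2 + ‖proj U v‖ ^ 2) -
        inner ℝ (proj U g) (proj U v)) := by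
  simp only [proj_eq_starProjection] at hg ⊢
  set ρ := r * √(1 - ‖v‖ ^ 2 + ‖U.starProjection v‖ ^ 2)
  have hρ : 0 ≤ ρ := by positivity
  have hmem : r • U.starProjection v - (ρ / ‖U.starProjection g‖) • U.starProjection g ∈ U :=
    U.sub_mem (U.smul_mem r (U.starProjection_apply_mem v))
      (U.smul_mem _ (U.starProjection_apply_mem g))
  have hinner (y : EuclideanSpace ℝ (Fin n)) (hy : y ∈ U) :
      inner ℝ g y = inner ℝ (U.starProjection g) y :=
    (U.real_inner_starProjection_of_mem hy g).symm
  refine ⟨⟨hmem, ?_⟩, fun y hy hyr => ?_, ?_⟩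
  · rw [U.norm_sub_smul_le_iff_of_mem hv hmem hr.le, norm_sub_div_norm_smul_sub_self hg _ hρ]
  · rw [hinner _ hmem, hinner y hy]
    exact real_inner_sub_div_norm_smul_le ((U.norm_sub_smul_le_iff_of_mem hv hy hr.le).1 hyr)
  · rw [hinner _ hmem, real_inner_sub_div_norm_smul hg, real_inner_smul_right]
    ring
end
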